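/- Let p > 1 and define g(t) = f₁(t)^{p+1}/t for t > 0. Then g is strictly increasing on (0,∞) and g(t) → 0 as t → 0⁺. -/

import Mathlib

open Real Filter Set

/-- `Fk κ t = ∫₀ᵗ √(1 + 2κ s²) ds`. -/
noncomputable def Fk (κ t : ℝ) : ℝ := ∫ s in (0:ℝ)..t, Real.sqrt (1 + 2*κ*s^2)

/-- `f` is the inverse of `Fk κ` on `[0,∞)`. -/
def IsInvF (κ : ℝ) (f : ℝ → ℝ) : Prop :=
  (∀ s, 0 ≤ s → f (Fk κ s) = s) ∧ ∀ t, 0 ≤ t → 0 ≤ f t ∧ Fk κ (f t) = t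

/-- The derivative formula `f_κ'(t) = (1 + 2κ f_κ(t)²)^{-1/2}`. -/
noncomputable def fd (κ : ℝ) (f : ℝ → ℝ) (t : ℝ) : ℝ :=
  1 / Real.sqrt (1 + 2*κ*(f t)^2)

/-! Substituting `t = F₁ s`, the function becomes `s ^ (p + 1) / F₁ s = s ^ (p - 1) * (s ^ 2 / F₁ s)`.
The factor `s ^ 2 / F₁ s` is increasing since its derivative has the sign of
`2 F₁ s - s √(1 + 2 s²)`, which vanishes at `0` and has derivative `1 / √(1 + 2 s²) > 0`.
For the limit, `F₁ s ≥ s` gives `f₁ t ≤ t`, so the function is at most `t ^ p`. -/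

section Fk

variable {κ s : ℝ}

lemma hasDerivAt_Fk (κ s : ℝ) : HasDerivAt (Fk κ) √(1 + 2 * κ * s ^ 2) s :=
  ((by fun_prop : Continuous fun s : ℝ => √(1 + 2 * κ * s ^ 2)).integral_hasStrictDerivAt
    0 s).hasDerivAt

@[simp]
lemma Fk_zero (κ : ℝ) : Fk κ 0 = 0 := by simp [Fk]

lemma one_le_sqrt_one_add_two_mul_sq (hκ : 0 ≤ κ) (s : ℝ) : 1 ≤ √(1 + 2 * κ * s ^ 2) :=
  Real.one_le_sqrt.mpr (by nlinarith [sq_nonneg s])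

lemma Fk_strictMono (hκ : 0 ≤ κ) : StrictMono (Fk κ) :=
  strictMono_of_hasDerivAt_pos (hasDerivAt_Fk κ) fun s =>
    one_pos.trans_le (one_le_sqrt_one_add_two_mul_sq hκ s)

lemma le_Fk (hκ : 0 ≤ κ) (hs : 0 ≤ s) : s ≤ Fk κ s := by
  have hmono : Monotone fun s => Fk κ s - s :=
    monotone_of_hasDerivAt_nonneg (fun s => (hasDerivAt_Fk κ s).sub (hasDerivAt_id s))
      fun s => sub_nonneg.mpr (one_le_sqrt_one_add_two_mul_sq hκ s)
  simpa using hmono hs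

lemma Fk_pos (hκ : 0 ≤ κ) (hs : 0 < s) : 0 < Fk κ s :=
  hs.trans_le (le_Fk hκ hs.le)

lemma mul_sqrt_lt_two_mul_Fk (hκ : 0 ≤ κ) (hs : 0 < s) :
    s * √(1 + 2 * κ * s ^ 2) < 2 * Fk κ s := by
  have hderiv (x : ℝ) : HasDerivAt (fun x => 2 * Fk κ x - x * √(1 + 2 * κ * x ^ 2))
      (1 / √(1 + 2 * κ * x ^ 2)) x := by
    have hq : 0 < 1 + 2 * κ * x ^ 2 := by positivity
    have hroot : HasDerivAt (fun x => √(1 + 2 * κ * x ^ 2))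
        (4 * κ * x / (2 * √(1 + 2 * κ * x ^ 2))) x := by
      refine HasDerivAt.sqrt ?_ hq.ne'
      refine (((hasDerivAt_pow 2 x).const_mul (2 * κ)).const_add 1).congr_deriv ?_
      ring
    refine (((hasDerivAt_Fk κ x).const_mul 2).sub ((hasDerivAt_id x).mul hroot)).congr_deriv ?_
    have hsq := Real.sq_sqrt hq.le
    simp only [id]
    field_simp
    linear_combination 2 * hsq
  simpa using strictMono_of_hasDerivAt_pos hderiv (fun x => by positivity) hs

lemma strictMonoOn_sq_div_Fk (hκ : 0 ≤ κ) :
    StrictMonoOn (fun s => s ^ 2 / Fk κ s) (Ioi 0) := by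
  have hderiv (x : ℝ) (hx : 0 < x) : HasDerivAt (fun s => s ^ 2 / Fk κ s)
      ((2 * x * Fk κ x - x ^ 2 * √(1 + 2 * κ * x ^ 2)) / Fk κ x ^ 2) x := by
    refine ((hasDerivAt_pow 2 x).div (hasDerivAt_Fk κ x) (Fk_pos hκ hx).ne').congr_deriv ?_
    ring
  refine strictMonoOn_of_deriv_pos (convex_Ioi 0)
    (fun x hx => (hderiv x hx).continuousAt.continuousWithinAt) fun x hx => ?_
  rw [interior_Ioi] at hx
  rw [(hderiv x hx).deriv]
  have hkey := mul_sqrt_lt_two_mul_Fk hκ hx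
  have hF := Fk_pos hκ hx
  apply div_pos _ (by positivity)
  nlinarith [mul_lt_mul_of_pos_left hkey hx]

lemma strictMonoOn_rpow_add_one_div_Fk (hκ : 0 ≤ κ) {p : ℝ} (hp : 1 ≤ p) :
    StrictMonoOn (fun s => s ^ (p + 1) / Fk κ s) (Ioi 0) := by
  intro a (ha : 0 < a) b (hb : 0 < b) hab
  have hsplit (x : ℝ) (hx : 0 < x) : x ^ (p + 1) / Fk κ x = x ^ (p - 1) * (x ^ 2 / Fk κ x) := by
    rw [← mul_div_assoc, ← Real.rpow_natCast, ← Real.rpow_add hx]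
    ring_nf
  simp only [hsplit a ha, hsplit b hb]
  exact mul_lt_mul' (Real.rpow_le_rpow (le_of_lt ha) hab.le (by linarith))
    (strictMonoOn_sq_div_Fk hκ ha hb hab) (div_nonneg (sq_nonneg a) (Fk_pos hκ ha).le)
    (Real.rpow_pos_of_pos hb _)

end Fk

namespace IsInvF

variable {κ : ℝ} {f : ℝ → ℝ} {t : ℝ}

lemma apply_pos (hf : IsInvF κ f) (ht : 0 < t) : 0 < f t := by
  obtain ⟨hnonneg, hFf⟩ := hf.2 t ht.le
  refine hnonneg.lt_of_ne fun h => ?_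
  rw [← h, Fk_zero] at hFf
  exact ht.ne hFf

lemma apply_le (hκ : 0 ≤ κ) (hf : IsInvF κ f) (ht : 0 ≤ t) : f t ≤ t := by
  obtain ⟨hnonneg, hFf⟩ := hf.2 t ht
  calc f t ≤ Fk κ (f t) := le_Fk hκ hnonneg
    _ = t := hFf

lemma strictMonoOn (hκ : 0 ≤ κ) (hf : IsInvF κ f) : StrictMonoOn f (Ici 0) := by
  intro a ha b hb hab
  rw [← (Fk_strictMono hκ).lt_iff_lt, (hf.2 a ha).2, (hf.2 b hb).2]
  exact hab

end IsInvF

theorem stmt_14 (p : ℝ) (hp : 1 < p) (f₁ : ℝ → ℝ) (hf₁ : IsInvF 1 f₁) :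
    StrictMonoOn (fun t => (f₁ t) ^ (p + 1) / t) (Set.Ioi 0) ∧
    Filter.Tendsto (fun t => (f₁ t) ^ (p + 1) / t)
      (nhdsWithin 0 (Set.Ioi 0)) (nhds 0) := by
  constructor
  · have hcomp := (strictMonoOn_rpow_add_one_div_Fk zero_le_one hp.le).comp
      ((hf₁.strictMonoOn zero_le_one).mono Ioi_subset_Ici_self) fun t ht => hf₁.apply_pos ht
    refine hcomp.congr fun t ht => ?_
    simp only [Function.comp_apply, (hf₁.2 t (le_of_lt ht)).2]
  · have hpow : Tendsto (fun t : ℝ => t ^ p) (nhdsWithin 0 (Ioi 0)) (nhds 0) := by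
      simpa [Real.zero_rpow (by linarith : p ≠ 0)] using
        ((Real.continuousAt_rpow_const 0 p (.inr (by linarith))).tendsto).mono_left
          nhdsWithin_le_nhds
    refine tendsto_of_tendsto_of_tendsto_of_le_of_le' tendsto_const_nhds hpow ?_ ?_ <;>
      filter_upwards [self_mem_nhdsWithin] with t (ht : 0 < t)
    · exact div_nonneg (Real.rpow_nonneg (hf₁.apply_pos ht).le _) ht.le
    · calc f₁ t ^ (p + 1) / t ≤ t ^ (p + 1) / t := by
            gcongr
            exacts [(hf₁.apply_pos ht).le, hf₁.apply_le zero_le_one ht.le]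
        _ = t ^ p := by rw [Real.rpow_add_one ht.ne', mul_div_cancel_right₀ _ ht.ne']
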